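/- arXiv:1408.3325 — 2 statements merged into one kernel-verified Lean document; each statement's English description precedes it below -/
import Mathlib

section
/- For every two spanning paths P₁=(V,E₁) and P₂=(V,E₂) on a common set V of n vertices, there exists a RacSim drawing of P₁ and P₂ on an integer grid of size 2n×2n in which every edge of both paths is drawn with at most one bend. -/
open SimpleGraph

/-- A polyline with `n` straight-line segments, given by its `n + 1` corner points. -/
structure Polyline where
  n : ℕ
  pts : Fin (n + 1) → ℝ × ℝ

namespace Polyline

/-- The first point of a polyline. -/
def first (P : Polyline) : ℝ × ℝ := P.pts 0

/-- The last point of a polyline. -/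
def last (P : Polyline) : ℝ × ℝ := P.pts (Fin.last P.n)

/-- The segments of a polyline, as ordered pairs of endpoints. -/
def segs (P : Polyline) : Set ((ℝ × ℝ) × (ℝ × ℝ)) :=
  {s | ∃ i : Fin P.n, s = (P.pts i.castSucc, P.pts i.succ)}

/-- The set of points covered by a polyline. -/
def curve (P : Polyline) : Set (ℝ × ℝ) :=
  ⋃ i : Fin P.n, segment ℝ (P.pts i.castSucc) (P.pts i.succ)

end Polyline

/-- Two segments are perpendicular: their direction vectors have zero dot product. -/
def SegPerp (s t : (ℝ × ℝ) × (ℝ × ℝ)) : Prop :=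
  (s.2.1 - s.1.1) * (t.2.1 - t.1.1) + (s.2.2 - s.1.2) * (t.2.2 - t.1.2) = 0

/-- Two segments cross: their relative interiors meet. -/
def SegCross (s t : (ℝ × ℝ) × (ℝ × ℝ)) : Prop :=
  (openSegment ℝ s.1 s.2 ∩ openSegment ℝ t.1 t.2).Nonempty

/-- A point has integer coordinates lying in `{1, …, a} × {1, …, b}`. -/
def OnGridPt (a b : ℤ) (p : ℝ × ℝ) : Prop :=
  ∃ x y : ℤ, p = ((x : ℝ), (y : ℝ)) ∧ 1 ≤ x ∧ x ≤ a ∧ 1 ≤ y ∧ y ≤ b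

/-- A simultaneous polyline drawing of the graphs `G 0, …, G (m - 1)` on a common
vertex set `V`: an injective placement of the vertices in the plane together with,
for each graph and each of its edges, a polyline joining the placements of the two
endpoints of the edge. -/
structure SimDrawing {V : Type} {m : ℕ} (G : Fin m → SimpleGraph V) where
  pos : V → ℝ × ℝ
  pos_injective : Function.Injective pos
  poly : Fin m → Sym2 V → Polyline
  joins : ∀ (i : Fin m) (a b : V), (G i).Adj a b →
    ((poly i s(a, b)).first = pos a ∧ (poly i s(a, b)).last = pos b) ∨
    ((poly i s(a, b)).first = pos b ∧ (poly i s(a, b)).last = pos a)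

namespace SimDrawing

variable {V : Type} {m : ℕ} {G : Fin m → SimpleGraph V} (D : SimDrawing G)

/-- (i) Each graph is drawn planar: the polylines of two distinct edges of the same
graph intersect only in points representing common endpoints. -/
def PlanarEach : Prop :=
  ∀ i : Fin m, ∀ e ∈ (G i).edgeSet, ∀ e' ∈ (G i).edgeSet, e ≠ e' →
    (D.poly i e).curve ∩ (D.poly i e').curve ⊆
      {p | ∃ v : V, v ∈ e ∧ v ∈ e' ∧ p = D.pos v}

/-- (ii) No two segments belonging to distinct edges overlap in more than one point. -/
def NoOverlaps : Prop :=
  ∀ i : Fin m, ∀ e ∈ (G i).edgeSet, ∀ j : Fin m, ∀ e' ∈ (G j).edgeSet,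
    (i ≠ j ∨ e ≠ e') →
      ∀ s ∈ (D.poly i e).segs, ∀ t ∈ (D.poly j e').segs,
        (segment ℝ s.1 s.2 ∩ segment ℝ t.1 t.2).Subsingleton

/-- (iii) Whenever segments of edges of two different graphs cross, they are
perpendicular at the crossing point. -/
def RightAngleCrossings : Prop :=
  ∀ i j : Fin m, i ≠ j → ∀ e ∈ (G i).edgeSet, ∀ e' ∈ (G j).edgeSet,
    ∀ s ∈ (D.poly i e).segs, ∀ t ∈ (D.poly j e').segs, SegCross s t → SegPerp s t

/-- A RacSim (RAC simultaneous) drawing: conditions (i), (ii) and (iii). -/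
def IsRacSim : Prop :=
  D.PlanarEach ∧ D.NoOverlaps ∧ D.RightAngleCrossings

/-- All vertex points and all corner points (hence all segment endpoints) of the
drawing lie on the integer grid `{1, …, a} × {1, …, b}`. -/
def OnGrid (a b : ℤ) : Prop :=
  (∀ v : V, OnGridPt a b (D.pos v)) ∧
    ∀ i : Fin m, ∀ e ∈ (G i).edgeSet, ∀ k : Fin ((D.poly i e).n + 1),
      OnGridPt a b ((D.poly i e).pts k)

/-- Every edge of the `i`-th graph is drawn with at most `k` bends, i.e. its
polyline consists of at most `k + 1` segments. -/
def BendsAtMost (i : Fin m) (k : ℕ) : Prop :=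
  ∀ e ∈ (G i).edgeSet, (D.poly i e).n ≤ k + 1

end SimDrawing

/-- The degree of a vertex of a graph. -/
noncomputable def vdeg {V : Type} (G : SimpleGraph V) (v : V) : ℕ := (G.neighborSet v).ncard

/-- A spanning path on a vertex set: a connected graph with exactly two vertices of
degree 1 and all other vertices of degree 2 (a Hamiltonian path on the vertex set). -/
def IsSpanningPath {V : Type} (G : SimpleGraph V) : Prop :=
  G.Connected ∧ ∃ u v : V, u ≠ v ∧ vdeg G u = 1 ∧ vdeg G v = 1 ∧
    ∀ w : V, w ≠ u → w ≠ v → vdeg G w = 2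

open Set

private lemma mem_seg_iff {p q z : ℝ × ℝ} :
    z ∈ segment ℝ p q ↔ ∃ t : ℝ, 0 ≤ t ∧ t ≤ 1 ∧
      z.1 = p.1 + t * (q.1 - p.1) ∧ z.2 = p.2 + t * (q.2 - p.2) := by
  rw [segment_eq_image']
  constructor
  · rintro ⟨t, ⟨h0, h1⟩, rfl⟩
    exact ⟨t, h0, h1, by simp [Prod.ext_iff, smul_eq_mul, mul_comm],
      by simp [Prod.ext_iff, smul_eq_mul, mul_comm]⟩
  · rintro ⟨t, h0, h1, hx, hy⟩
    exact ⟨t, ⟨h0, h1⟩, by ext <;> simp [hx, hy, smul_eq_mul, mul_comm]⟩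

private lemma mem_openSeg_iff {p q z : ℝ × ℝ} :
    z ∈ openSegment ℝ p q ↔ ∃ t : ℝ, 0 < t ∧ t < 1 ∧
      z.1 = p.1 + t * (q.1 - p.1) ∧ z.2 = p.2 + t * (q.2 - p.2) := by
  rw [openSegment_eq_image']
  constructor
  · rintro ⟨t, ⟨h0, h1⟩, rfl⟩
    exact ⟨t, h0, h1, by simp [Prod.ext_iff, smul_eq_mul, mul_comm],
      by simp [Prod.ext_iff, smul_eq_mul, mul_comm]⟩
  · rintro ⟨t, h0, h1, hx, hy⟩
    exact ⟨t, ⟨h0, h1⟩, by ext <;> simp [hx, hy, smul_eq_mul, mul_comm]⟩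

private lemma seg_fst_bounds {p q z : ℝ × ℝ} (hz : z ∈ segment ℝ p q) :
    min p.1 q.1 ≤ z.1 ∧ z.1 ≤ max p.1 q.1 := by
  obtain ⟨t, h0, h1, hx, -⟩ := mem_seg_iff.1 hz
  rcases le_total p.1 q.1 with h | h
  · rw [min_eq_left h, max_eq_right h]; constructor <;> nlinarith
  · rw [min_eq_right h, max_eq_left h]; constructor <;> nlinarith

private lemma seg_snd_bounds {p q z : ℝ × ℝ} (hz : z ∈ segment ℝ p q) :
    min p.2 q.2 ≤ z.2 ∧ z.2 ≤ max p.2 q.2 := by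
  obtain ⟨t, h0, h1, -, hy⟩ := mem_seg_iff.1 hz
  rcases le_total p.2 q.2 with h | h
  · rw [min_eq_left h, max_eq_right h]; constructor <;> nlinarith
  · rw [min_eq_right h, max_eq_left h]; constructor <;> nlinarith

private lemma openSeg_fst_strict {p q z : ℝ × ℝ} (hz : z ∈ openSegment ℝ p q)
    (h : p.1 < q.1) : p.1 < z.1 ∧ z.1 < q.1 := by
  obtain ⟨t, h0, h1, hx, -⟩ := mem_openSeg_iff.1 hz
  constructor <;> nlinarith

private lemma openSeg_snd_strict {p q z : ℝ × ℝ} (hz : z ∈ openSegment ℝ p q)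
    (h : p.2 < q.2) : p.2 < z.2 ∧ z.2 < q.2 := by
  obtain ⟨t, h0, h1, -, hy⟩ := mem_openSeg_iff.1 hz
  constructor <;> nlinarith

private lemma seg_fst_const {p q z : ℝ × ℝ} (hz : z ∈ segment ℝ p q)
    (h : p.1 = q.1) : z.1 = p.1 := by
  obtain ⟨t, -, -, hx, -⟩ := mem_seg_iff.1 hz
  rw [hx, ← h]; ring

private lemma seg_snd_const {p q z : ℝ × ℝ} (hz : z ∈ segment ℝ p q)
    (h : p.2 = q.2) : z.2 = p.2 := by
  obtain ⟨t, -, -, -, hy⟩ := mem_seg_iff.1 hz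
  rw [hy, ← h]; ring

private lemma seg_eq_of_fst {p q z w : ℝ × ℝ} (hpq : p.1 ≠ q.1)
    (hz : z ∈ segment ℝ p q) (hw : w ∈ segment ℝ p q) (h : z.1 = w.1) : z = w := by
  obtain ⟨t, -, -, hzx, hzy⟩ := mem_seg_iff.1 hz
  obtain ⟨s, -, -, hwx, hwy⟩ := mem_seg_iff.1 hw
  have hts : t = s := by
    have hd : q.1 - p.1 ≠ 0 := sub_ne_zero.2 (Ne.symm hpq)
    have : t * (q.1 - p.1) = s * (q.1 - p.1) := by linarith [h, hzx, hwx]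
    exact mul_right_cancel₀ hd this
  ext
  · rw [hzx, hwx, hts]
  · rw [hzy, hwy, hts]

private lemma seg_eq_of_snd {p q z w : ℝ × ℝ} (hpq : p.2 ≠ q.2)
    (hz : z ∈ segment ℝ p q) (hw : w ∈ segment ℝ p q) (h : z.2 = w.2) : z = w := by
  obtain ⟨t, -, -, hzx, hzy⟩ := mem_seg_iff.1 hz
  obtain ⟨s, -, -, hwx, hwy⟩ := mem_seg_iff.1 hw
  have hts : t = s := by
    have hd : q.2 - p.2 ≠ 0 := sub_ne_zero.2 (Ne.symm hpq)
    have : t * (q.2 - p.2) = s * (q.2 - p.2) := by linarith [h, hzy, hwy]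
    exact mul_right_cancel₀ hd this
  ext
  · rw [hzx, hwx, hts]
  · rw [hzy, hwy, hts]

private lemma inter_subsingleton_of_det {p q r s : ℝ × ℝ}
    (hdet : (q.1 - p.1) * (s.2 - r.2) - (q.2 - p.2) * (s.1 - r.1) ≠ 0) :
    (segment ℝ p q ∩ segment ℝ r s).Subsingleton := by
  rintro z ⟨hz1, hz2⟩ w ⟨hw1, hw2⟩
  obtain ⟨t1, -, -, e1, e2⟩ := mem_seg_iff.1 hz1
  obtain ⟨t2, -, -, e3, e4⟩ := mem_seg_iff.1 hz2
  obtain ⟨s1, -, -, e5, e6⟩ := mem_seg_iff.1 hw1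
  obtain ⟨s2, -, -, e7, e8⟩ := mem_seg_iff.1 hw2
  have E1 : (t1 - s1) * (q.1 - p.1) = (t2 - s2) * (s.1 - r.1) := by
    have h1 : p.1 + t1 * (q.1 - p.1) = r.1 + t2 * (s.1 - r.1) := by rw [← e1, e3]
    have h2 : p.1 + s1 * (q.1 - p.1) = r.1 + s2 * (s.1 - r.1) := by rw [← e5, e7]
    nlinarith [h1, h2]
  have E2 : (t1 - s1) * (q.2 - p.2) = (t2 - s2) * (s.2 - r.2) := by
    have h1 : p.2 + t1 * (q.2 - p.2) = r.2 + t2 * (s.2 - r.2) := by rw [← e2, e4]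
    have h2 : p.2 + s1 * (q.2 - p.2) = r.2 + s2 * (s.2 - r.2) := by rw [← e6, e8]
    nlinarith [h1, h2]
  have key : (t1 - s1) * ((q.1 - p.1) * (s.2 - r.2) - (q.2 - p.2) * (s.1 - r.1)) = 0 := by
    linear_combination (s.2 - r.2) * E1 - (s.1 - r.1) * E2
  have hts : t1 = s1 := by
    rcases mul_eq_zero.1 key with h | h
    · linarith [sub_eq_zero.1 h]
    · exact absurd h hdet
  ext
  · rw [e1, e5, hts]
  · rw [e2, e6, hts]

/-! ### the concrete points of the construction -/

/-- vertex point with column index `k` and row index `m` -/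
private def vA (k m : ℕ) : ℝ × ℝ := (2*(k:ℝ)+1, 2*(m:ℝ)+2)
/-- bend point of a `P₁`-edge -/
private def bA (k m : ℕ) : ℝ × ℝ := (2*(k:ℝ)+1, 2*(m:ℝ)+1)
/-- bend point of a `P₂`-edge -/
private def bB (k m : ℕ) : ℝ × ℝ := (2*(k:ℝ)+2, 2*(m:ℝ)+2)

-- P₁ edge (k, m₁, m₂): segments  V = [vA k m₁, bA k m₂],  D = [bA k m₂, vA (k+1) m₂]
-- P₂ edge (j, r₁, r₂): segments  H = [vA r₁ j, bB r₂ j],  E = [bB r₂ j, vA r₂ (j+1)]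

private lemma vA_fst (k m : ℕ) : (vA k m).1 = 2*(k:ℝ)+1 := rfl
private lemma vA_snd (k m : ℕ) : (vA k m).2 = 2*(m:ℝ)+2 := rfl

-- cast helpers
private lemma rne_oe {a b : ℕ} : (2*(a:ℝ)+1) ≠ (2*(b:ℝ)+2) := by
  intro h
  have : 2*(a:ℤ)+1 = 2*(b:ℤ)+2 := by exact_mod_cast h
  omega

private lemma rne_oo {a b : ℕ} (hab : a ≠ b) : (2*(a:ℝ)+1) ≠ (2*(b:ℝ)+1) := by
  intro h
  have : 2*(a:ℤ)+1 = 2*(b:ℤ)+1 := by exact_mod_cast h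
  omega

private lemma rne_ee {a b : ℕ} (hab : a ≠ b) : (2*(a:ℝ)+2) ≠ (2*(b:ℝ)+2) := by
  intro h
  have : 2*(a:ℤ)+2 = 2*(b:ℤ)+2 := by exact_mod_cast h
  omega


/-- Planarity of the first path: two distinct edges meet only in a common vertex. -/
private lemma p1_planar {k l m₁ m₂ m₁' m₂' : ℕ} (hkl : k < l)
    (hadjc : l = k + 1 → m₂ = m₁') {z : ℝ × ℝ}
    (hz : z ∈ segment ℝ (vA k m₁) (bA k m₂) ∪ segment ℝ (bA k m₂) (vA (k+1) m₂))
    (hz' : z ∈ segment ℝ (vA l m₁') (bA l m₂') ∪ segment ℝ (bA l m₂') (vA (l+1) m₂')) :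
    l = k + 1 ∧ z = vA l m₁' := by
  have hDk : (bA k m₂).1 ≠ (vA (k+1) m₂).1 := by
    simp only [bA, vA]; push_cast; intro h; norm_num at h
  have hDl : (bA l m₂').1 ≠ (vA (l+1) m₂').1 := by
    simp only [bA, vA]; push_cast; intro h; norm_num at h
  rcases hz with hzV | hzD
  · have hx : z.1 = 2*(k:ℝ)+1 := seg_fst_const hzV rfl
    rcases hz' with hzV' | hzD'
    · exfalso
      have hx' : z.1 = 2*(l:ℝ)+1 := seg_fst_const hzV' rfl
      exact rne_oo (Nat.ne_of_lt hkl) (by rw [← hx, hx'])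
    · exfalso
      have hb := (seg_fst_bounds hzD').1
      have hmin : min (bA l m₂').1 (vA (l+1) m₂').1 = 2*(l:ℝ)+1 := by
        simp only [bA, vA]; rw [min_eq_left]; push_cast; linarith
      rw [hmin, hx] at hb
      have : 2*l+1 ≤ 2*k+1 := by exact_mod_cast hb
      omega
  · have hb1 := (seg_fst_bounds hzD).2
    have hmax : max (bA k m₂).1 (vA (k+1) m₂).1 = 2*(k:ℝ)+3 := by
      simp only [bA, vA]; rw [max_eq_right] <;> push_cast <;> linarith
    rw [hmax] at hb1
    rcases hz' with hzV' | hzD'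
    · have hx' : z.1 = 2*(l:ℝ)+1 := seg_fst_const hzV' rfl
      have hle : (2*(l:ℝ)+1) ≤ 2*(k:ℝ)+3 := by rw [← hx']; linarith
      have hlk : l = k + 1 := by
        have : 2*l+1 ≤ 2*k+3 := by exact_mod_cast hle
        omega
      subst hlk
      have hm : m₂ = m₁' := hadjc rfl
      subst hm
      have hxq : z.1 = (vA (k+1) m₂).1 := by
        simp only [vA]; rw [hx']; try push_cast; try ring
      have hzq : z = vA (k+1) m₂ :=
        seg_eq_of_fst hDk hzD (right_mem_segment ℝ _ _) hxq
      exact ⟨rfl, hzq⟩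
    · have hb2 := (seg_fst_bounds hzD').1
      have hmin : min (bA l m₂').1 (vA (l+1) m₂').1 = 2*(l:ℝ)+1 := by
        simp only [bA, vA]; rw [min_eq_left]; push_cast; linarith
      rw [hmin] at hb2
      have hlk : l = k + 1 := by
        have hle : (2*(l:ℝ)+1) ≤ 2*(k:ℝ)+3 := by linarith
        have : 2*l+1 ≤ 2*k+3 := by exact_mod_cast hle
        omega
      subst hlk
      exfalso
      have hxz : z.1 = 2*(k:ℝ)+3 := by push_cast at hb2 ⊢; linarith
      have hzq : z = vA (k+1) m₂ :=
        seg_eq_of_fst hDk hzD (right_mem_segment ℝ _ _)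
          (by simp only [vA]; rw [hxz]; try push_cast; try ring)
      have hzb : z = bA (k+1) m₂' :=
        seg_eq_of_fst hDl hzD' (left_mem_segment ℝ _ _)
          (by simp only [bA]; rw [hxz]; try push_cast; try ring)
      have hcc : (vA (k+1) m₂).2 = (bA (k+1) m₂').2 := by rw [← hzq, ← hzb]
      simp only [vA, bA] at hcc
      exact rne_oe (a := m₂') (b := m₂) hcc.symm

/-- Planarity of the second path. -/
private lemma p2_planar {j j' r₁ r₂ r₁' r₂' : ℕ} (hjj : j < j')
    (hadjc : j' = j + 1 → r₂ = r₁') {z : ℝ × ℝ}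
    (hz : z ∈ segment ℝ (vA r₁ j) (bB r₂ j) ∪ segment ℝ (bB r₂ j) (vA r₂ (j+1)))
    (hz' : z ∈ segment ℝ (vA r₁' j') (bB r₂' j') ∪ segment ℝ (bB r₂' j') (vA r₂' (j'+1))) :
    j' = j + 1 ∧ z = vA r₁' j' := by
  have hEj : (bB r₂ j).2 ≠ (vA r₂ (j+1)).2 := by
    simp only [bB, vA]; push_cast; intro h; norm_num at h
  have hEj' : (bB r₂' j').2 ≠ (vA r₂' (j'+1)).2 := by
    simp only [bB, vA]; push_cast; intro h; norm_num at h
  rcases hz with hzH | hzE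
  · have hy : z.2 = 2*(j:ℝ)+2 := seg_snd_const hzH rfl
    rcases hz' with hzH' | hzE'
    · exfalso
      have hy' : z.2 = 2*(j':ℝ)+2 := seg_snd_const hzH' rfl
      exact rne_ee (Nat.ne_of_lt hjj) (by rw [← hy, hy'])
    · exfalso
      have hb := (seg_snd_bounds hzE').1
      have hmin : min (bB r₂' j').2 (vA r₂' (j'+1)).2 = 2*(j':ℝ)+2 := by
        simp only [bB, vA]; rw [min_eq_left]; push_cast; linarith
      rw [hmin, hy] at hb
      have : 2*j'+2 ≤ 2*j+2 := by exact_mod_cast hb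
      omega
  · have hb1 := (seg_snd_bounds hzE).2
    have hmax : max (bB r₂ j).2 (vA r₂ (j+1)).2 = 2*(j:ℝ)+4 := by
      simp only [bB, vA]; rw [max_eq_right] <;> push_cast <;> linarith
    rw [hmax] at hb1
    rcases hz' with hzH' | hzE'
    · have hy' : z.2 = 2*(j':ℝ)+2 := seg_snd_const hzH' rfl
      have hlk : j' = j + 1 := by
        have hle : (2*(j':ℝ)+2) ≤ 2*(j:ℝ)+4 := by rw [← hy']; linarith
        have : 2*j'+2 ≤ 2*j+4 := by exact_mod_cast hle
        omega
      subst hlk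
      have hm : r₂ = r₁' := hadjc rfl
      subst hm
      have hyq : z.2 = (vA r₂ (j+1)).2 := by
        simp only [vA]; rw [hy']; try push_cast; try ring
      have hzq : z = vA r₂ (j+1) :=
        seg_eq_of_snd hEj hzE (right_mem_segment ℝ _ _) hyq
      exact ⟨rfl, hzq⟩
    · have hb2 := (seg_snd_bounds hzE').1
      have hmin : min (bB r₂' j').2 (vA r₂' (j'+1)).2 = 2*(j':ℝ)+2 := by
        simp only [bB, vA]; rw [min_eq_left]; push_cast; linarith
      rw [hmin] at hb2
      have hlk : j' = j + 1 := by
        have hle : (2*(j':ℝ)+2) ≤ 2*(j:ℝ)+4 := by linarith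
        have : 2*j'+2 ≤ 2*j+4 := by exact_mod_cast hle
        omega
      subst hlk
      exfalso
      have hyz : z.2 = 2*(j:ℝ)+4 := by push_cast at hb2 ⊢; linarith
      have hzq : z = vA r₂ (j+1) :=
        seg_eq_of_snd hEj hzE (right_mem_segment ℝ _ _)
          (by simp only [vA]; rw [hyz]; try push_cast; try ring)
      have hzb : z = bB r₂' (j+1) :=
        seg_eq_of_snd hEj' hzE' (left_mem_segment ℝ _ _)
          (by simp only [bB]; rw [hyz]; try push_cast; try ring)
      have hcc : (vA r₂ (j+1)).1 = (bB r₂' (j+1)).1 := by rw [← hzq, ← hzb]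
      simp only [vA, bB] at hcc
      exact rne_oe (a := r₂) (b := r₂') hcc
private lemma spath_order {V : Type} [Fintype V] {G : SimpleGraph V} (h : IsSpanningPath G) :
    ∃ f : V → ℕ, Function.Injective f ∧ (∀ v, f v < Fintype.card V) ∧
      ∀ a b : V, G.Adj a b ↔ (f a + 1 = f b ∨ f b + 1 = f a) := by
  classical
  obtain ⟨hconn, u, v, huv, hdu, hdv, hdw⟩ := h
  obtain ⟨p0⟩ := hconn.preconnected u v
  set q : G.Walk u v := (p0.toPath : G.Walk u v) with hq
  have hqpath : q.IsPath := p0.toPath.2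
  set l : List V := q.support with hl
  have hnodup : l.Nodup := hqpath.support_nodup
  have hne : l ≠ [] := q.support_ne_nil
  have hhead : l.head hne = u := q.head_support
  have hlast : l.getLast hne = v := q.getLast_support
  have hchain : l.Chain' G.Adj := q.isChain_adj_support
  have hlen2 : 2 ≤ l.length := by
    rcases hlb : l with - | ⟨a, l'⟩
    · exact absurd hlb hne
    rcases l' with - | ⟨b, l''⟩
    · exfalso
      apply huv
      have h1 : u = a := by rw [← hhead]; simp [hlb]
      have h2 : v = a := by rw [← hlast]; simp [hlb]
      rw [h1, h2]
    · simp only [List.length_cons]; omega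
  have hget0 : ∀ (h0 : 0 < l.length), l.get ⟨0, h0⟩ = u := by
    intro h0
    rw [← hhead]
    exact List.getElem_zero h0
  have hgetlast : ∀ (hh : l.length - 1 < l.length), l.get ⟨l.length - 1, hh⟩ = v := by
    intro hh
    rw [← hlast, List.getLast_eq_getElem]
    rfl
  have hadj : ∀ (i : ℕ) (h1 : i < l.length) (h2 : i + 1 < l.length),
      G.Adj (l.get ⟨i, h1⟩) (l.get ⟨i + 1, h2⟩) := by
    intro i h1 h2
    exact List.isChain_iff_getElem.1 hchain i (by omega)
  have hnbr : ∀ (k : ℕ) (hk : k < l.length) (b : V), G.Adj (l.get ⟨k, hk⟩) b →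
      (∃ h' : k + 1 < l.length, b = l.get ⟨k + 1, h'⟩) ∨
      (∃ (j : ℕ) (h' : j < l.length), k = j + 1 ∧ b = l.get ⟨j, h'⟩) := by
    intro k hk b hb
    set a := l.get ⟨k, hk⟩ with ha
    have hbmem : b ∈ G.neighborSet a := hb
    rcases Nat.eq_zero_or_pos k with rfl | hkpos
    · have hau : a = u := hget0 hk
      have h1 : 0 + 1 < l.length := by omega
      have hnx : l.get ⟨1, h1⟩ ∈ G.neighborSet a := hadj 0 hk h1
      have hcard : (G.neighborSet a).ncard = 1 := by rw [hau]; exact hdu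
      obtain ⟨x, hx⟩ := Set.ncard_eq_one.1 hcard
      rw [hx] at hbmem hnx
      simp only [Set.mem_singleton_iff] at hbmem hnx
      exact Or.inl ⟨h1, by rw [hbmem, ← hnx]⟩
    · rcases Nat.lt_or_ge (k + 1) l.length with hk1 | hk1
      · have hanu : a ≠ u := by
          intro hau
          have h0 : (0:ℕ) < l.length := by omega
          have hgg : l.get ⟨k, hk⟩ = l.get ⟨0, h0⟩ := by rw [← ha, hau, hget0]
          have := List.Nodup.get_inj_iff hnodup |>.1 hgg
          simp only [Fin.mk.injEq] at this; omega
        have hanv : a ≠ v := by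
          intro hav
          have hh : l.length - 1 < l.length := by omega
          have hgg : l.get ⟨k, hk⟩ = l.get ⟨l.length - 1, hh⟩ := by rw [← ha, hav, hgetlast]
          have := List.Nodup.get_inj_iff hnodup |>.1 hgg
          simp only [Fin.mk.injEq] at this; omega
        obtain ⟨j, rfl⟩ : ∃ j, k = j + 1 := ⟨k - 1, by omega⟩
        have hjlt : j < l.length := by omega
        have hprev : l.get ⟨j, hjlt⟩ ∈ G.neighborSet a := (hadj j hjlt hk).symm
        have hnext : l.get ⟨j + 1 + 1, hk1⟩ ∈ G.neighborSet a := hadj (j+1) hk hk1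
        have hpn : l.get ⟨j, hjlt⟩ ≠ l.get ⟨j + 1 + 1, hk1⟩ := by
          intro hcontra
          have := List.Nodup.get_inj_iff hnodup |>.1 hcontra
          simp only [Fin.mk.injEq] at this; omega
        have hsub : ({l.get ⟨j, hjlt⟩, l.get ⟨j + 1 + 1, hk1⟩} : Set V) ⊆ G.neighborSet a := by
          rintro x (rfl | rfl)
          exacts [hprev, hnext]
        have hcard2 : (G.neighborSet a).ncard = 2 := hdw a hanu hanv
        have heq : ({l.get ⟨j, hjlt⟩, l.get ⟨j + 1 + 1, hk1⟩} : Set V) = G.neighborSet a := by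
          apply Set.eq_of_subset_of_ncard_le hsub
          rw [hcard2, Set.ncard_pair hpn]
        rw [← heq] at hbmem
        rcases hbmem with rfl | rfl
        · exact Or.inr ⟨j, hjlt, rfl, rfl⟩
        · exact Or.inl ⟨hk1, rfl⟩
      · have hav : a = v := by
          have hkeq : k = l.length - 1 := by omega
          rw [ha]
          have hh : l.length - 1 < l.length := by omega
          have : (⟨k, hk⟩ : Fin l.length) = ⟨l.length - 1, hh⟩ := by
            simp only [Fin.mk.injEq]; omega
          rw [this, hgetlast]
        obtain ⟨j, rfl⟩ : ∃ j, k = j + 1 := ⟨k - 1, by omega⟩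
        have hjlt : j < l.length := by omega
        have hprev : l.get ⟨j, hjlt⟩ ∈ G.neighborSet a := (hadj j hjlt hk).symm
        have hcard : (G.neighborSet a).ncard = 1 := by rw [hav]; exact hdv
        obtain ⟨x, hx⟩ := Set.ncard_eq_one.1 hcard
        rw [hx] at hbmem hprev
        simp only [Set.mem_singleton_iff] at hbmem hprev
        exact Or.inr ⟨j, hjlt, rfl, by rw [hbmem, ← hprev]⟩
  -- closure: every vertex is in l
  have hstep : ∀ (x y : V), x ∈ l → G.Adj x y → y ∈ l := by
    intro x y hx hxy
    obtain ⟨⟨k, hk⟩, hget⟩ := List.mem_iff_get.1 hx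
    rcases hnbr k hk y (by rw [hget]; exact hxy) with ⟨h', rfl⟩ | ⟨j, h', -, rfl⟩
    · exact List.get_mem _ _
    · exact List.get_mem _ _
  have hmem : ∀ w : V, w ∈ l := by
    have hwalk : ∀ (x y : V) (pw : G.Walk x y), x ∈ l → y ∈ l := by
      intro x y pw
      induction pw with
      | nil => exact id
      | cons hadj' p' ih => exact fun hx => ih (hstep _ _ hx hadj')
    intro w
    obtain ⟨pw⟩ := hconn.preconnected u w
    exact hwalk u w pw (by rw [← hget0 (by omega)]; exact List.get_mem _ _)
  have hlencard : l.length = Fintype.card V := by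
    have h1 : l.toFinset.card = l.length := List.toFinset_card_of_nodup hnodup
    have h2 : l.toFinset = Finset.univ := by
      apply Finset.eq_univ_iff_forall.2
      intro w; exact List.mem_toFinset.2 (hmem w)
    rw [← h1, h2, Finset.card_univ]
  refine ⟨fun w => l.idxOf w, ?_, ?_, ?_⟩
  · intro a b hab
    exact (List.idxOf_inj (hmem a)).1 hab
  · intro w
    rw [← hlencard]
    exact List.idxOf_lt_length_iff.2 (hmem w)
  · intro a b
    constructor
    · intro hab
      have hka : l.idxOf a < l.length := List.idxOf_lt_length_iff.2 (hmem a)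
      have hgeta : l.get ⟨l.idxOf a, hka⟩ = a := List.idxOf_get hka
      rcases hnbr (l.idxOf a) hka b (by rw [hgeta]; exact hab) with ⟨h', hb⟩ | ⟨j, h', hk, hb⟩
      · left
        subst hb
        simp only [List.get_idxOf hnodup]
      · right
        subst hb
        simp only [List.get_idxOf hnodup]
        omega
    · intro hor
      dsimp only at hor
      have hka : l.idxOf a < l.length := List.idxOf_lt_length_iff.2 (hmem a)
      have hkb : l.idxOf b < l.length := List.idxOf_lt_length_iff.2 (hmem b)
      have hgeta : l.get ⟨l.idxOf a, hka⟩ = a := List.idxOf_get hka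
      have hgetb : l.get ⟨l.idxOf b, hkb⟩ = b := List.idxOf_get hkb
      rcases hor with hor | hor
      · have hlt : l.idxOf a + 1 < l.length := by omega
        have h2 := hadj (l.idxOf a) hka hlt
        rw [hgeta] at h2
        have hb' : b = l.get ⟨l.idxOf a + 1, hlt⟩ := by
          rw [← hgetb]
          congr 1
          exact Fin.ext (by simp; omega)
        rw [hb']
        exact h2
      · have hlt : l.idxOf b + 1 < l.length := by omega
        have h2 := hadj (l.idxOf b) hkb hlt
        rw [hgetb] at h2
        have ha' : a = l.get ⟨l.idxOf b + 1, hlt⟩ := by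
          rw [← hgeta]
          congr 1
          exact Fin.ext (by simp; omega)
        rw [ha']
        exact h2.symm


private lemma segcross_comm {s t : (ℝ × ℝ) × (ℝ × ℝ)} : SegCross s t ↔ SegCross t s := by
  unfold SegCross
  rw [Set.inter_comm]

/-! ### subsingleton lemmas for pairs of segments -/

private lemma ss_VV {k k' m₁ m₂ m₁' m₂' : ℕ} (h : k ≠ k') :
    (segment ℝ (vA k m₁) (bA k m₂) ∩ segment ℝ (vA k' m₁') (bA k' m₂')).Subsingleton := by
  rintro z ⟨hz1, hz2⟩ w -
  exfalso
  have h1 : z.1 = 2*(k:ℝ)+1 := seg_fst_const hz1 rfl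
  have h2 : z.1 = 2*(k':ℝ)+1 := seg_fst_const hz2 rfl
  exact rne_oo h (by rw [← h1, h2])

private lemma ss_HH {j j' r₁ r₂ r₁' r₂' : ℕ} (h : j ≠ j') :
    (segment ℝ (vA r₁ j) (bB r₂ j) ∩ segment ℝ (vA r₁' j') (bB r₂' j')).Subsingleton := by
  rintro z ⟨hz1, hz2⟩ w -
  exfalso
  have h1 : z.2 = 2*(j:ℝ)+2 := seg_snd_const hz1 rfl
  have h2 : z.2 = 2*(j':ℝ)+2 := seg_snd_const hz2 rfl
  exact rne_ee h (by rw [← h1, h2])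

private lemma dd_bounds {k m₂ : ℕ} {z : ℝ × ℝ} (hz : z ∈ segment ℝ (bA k m₂) (vA (k+1) m₂)) :
    2*(k:ℝ)+1 ≤ z.1 ∧ z.1 ≤ 2*(k:ℝ)+3 := by
  have b1 := (seg_fst_bounds hz).1
  have b2 := (seg_fst_bounds hz).2
  have hmin : min (bA k m₂).1 (vA (k+1) m₂).1 = 2*(k:ℝ)+1 := by
    simp only [bA, vA]; rw [min_eq_left]; push_cast; linarith
  have hmax : max (bA k m₂).1 (vA (k+1) m₂).1 = 2*(k:ℝ)+3 := by
    simp only [bA, vA]; rw [max_eq_right] <;> push_cast <;> linarith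
  rw [hmin] at b1; rw [hmax] at b2; exact ⟨b1, b2⟩

private lemma ee_bounds {j r₂ : ℕ} {z : ℝ × ℝ} (hz : z ∈ segment ℝ (bB r₂ j) (vA r₂ (j+1))) :
    2*(j:ℝ)+2 ≤ z.2 ∧ z.2 ≤ 2*(j:ℝ)+4 := by
  have b1 := (seg_snd_bounds hz).1
  have b2 := (seg_snd_bounds hz).2
  have hmin : min (bB r₂ j).2 (vA r₂ (j+1)).2 = 2*(j:ℝ)+2 := by
    simp only [bB, vA]; rw [min_eq_left]; push_cast; linarith
  have hmax : max (bB r₂ j).2 (vA r₂ (j+1)).2 = 2*(j:ℝ)+4 := by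
    simp only [bB, vA]; rw [max_eq_right] <;> push_cast <;> linarith
  rw [hmin] at b1; rw [hmax] at b2; exact ⟨b1, b2⟩

private lemma ss_DD {k k' m₂ m₂' : ℕ} (h : k ≠ k') :
    (segment ℝ (bA k m₂) (vA (k+1) m₂) ∩ segment ℝ (bA k' m₂') (vA (k'+1) m₂')).Subsingleton := by
  have hne : (bA k m₂).1 ≠ (vA (k+1) m₂).1 := by
    simp only [bA, vA]; push_cast; intro hc; norm_num at hc
  rintro z ⟨hz1, hz2⟩ w ⟨hw1, hw2⟩
  obtain ⟨z1a, z1b⟩ := dd_bounds hz1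
  obtain ⟨z2a, z2b⟩ := dd_bounds hz2
  obtain ⟨w1a, w1b⟩ := dd_bounds hw1
  obtain ⟨w2a, w2b⟩ := dd_bounds hw2
  apply seg_eq_of_fst hne hz1 hw1
  rcases Nat.lt_or_ge k k' with hlt | hge
  · have : 2*k'+1 ≤ 2*k+3 := by
      have : (2*(k':ℝ)+1) ≤ 2*(k:ℝ)+3 := by linarith
      exact_mod_cast this
    have hk : k' = k + 1 := by omega
    subst hk
    push_cast at z2a w2a z1b w1b ⊢
    linarith
  · have : 2*k+1 ≤ 2*k'+3 := by
      have : (2*(k:ℝ)+1) ≤ 2*(k':ℝ)+3 := by linarith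
      exact_mod_cast this
    have hk : k = k' + 1 := by omega
    subst hk
    push_cast at z2b w2b z1a w1a ⊢
    linarith

private lemma ss_EE {j j' r₂ r₂' : ℕ} (h : j ≠ j') :
    (segment ℝ (bB r₂ j) (vA r₂ (j+1)) ∩ segment ℝ (bB r₂' j') (vA r₂' (j'+1))).Subsingleton := by
  have hne : (bB r₂ j).2 ≠ (vA r₂ (j+1)).2 := by
    simp only [bB, vA]; push_cast; intro hc; norm_num at hc
  rintro z ⟨hz1, hz2⟩ w ⟨hw1, hw2⟩
  obtain ⟨z1a, z1b⟩ := ee_bounds hz1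
  obtain ⟨z2a, z2b⟩ := ee_bounds hz2
  obtain ⟨w1a, w1b⟩ := ee_bounds hw1
  obtain ⟨w2a, w2b⟩ := ee_bounds hw2
  apply seg_eq_of_snd hne hz1 hw1
  rcases Nat.lt_or_ge j j' with hlt | hge
  · have : 2*j'+2 ≤ 2*j+4 := by
      have : (2*(j':ℝ)+2) ≤ 2*(j:ℝ)+4 := by linarith
      exact_mod_cast this
    have hk : j' = j + 1 := by omega
    subst hk
    push_cast at z2a w2a z1b w1b ⊢
    linarith
  · have : 2*j+2 ≤ 2*j'+4 := by
      have : (2*(j:ℝ)+2) ≤ 2*(j':ℝ)+4 := by linarith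
      exact_mod_cast this
    have hk : j = j' + 1 := by omega
    subst hk
    push_cast at z2b w2b z1a w1a ⊢
    linarith

private lemma ss_VD {k m₁ m₂ k' m₂' : ℕ} :
    (segment ℝ (vA k m₁) (bA k m₂) ∩ segment ℝ (bA k' m₂') (vA (k'+1) m₂')).Subsingleton := by
  apply inter_subsingleton_of_det
  simp only [vA, bA]
  push_cast
  intro hc
  have h3 : (2*(m₂:ℝ)+1) = (2*(m₁:ℝ)+2) := by nlinarith [hc]
  exact rne_oe (a := m₂) (b := m₁) h3

private lemma ss_VH {k m₁ m₂ r₁ r₂ j : ℕ} :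
    (segment ℝ (vA k m₁) (bA k m₂) ∩ segment ℝ (vA r₁ j) (bB r₂ j)).Subsingleton := by
  apply inter_subsingleton_of_det
  simp only [vA, bA, bB]
  intro hc
  have hy : (2*(m₂:ℝ)+1) ≠ (2*(m₁:ℝ)+2) := fun h => rne_oe (a:=m₂) (b:=m₁) h
  have hx : (2*(r₂:ℝ)+2) ≠ (2*(r₁:ℝ)+1) := fun h => rne_oe (a:=r₁) (b:=r₂) h.symm
  have : ((2*(m₂:ℝ)+1) - (2*(m₁:ℝ)+2)) * ((2*(r₂:ℝ)+2) - (2*(r₁:ℝ)+1)) ≠ 0 :=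
    mul_ne_zero (sub_ne_zero.2 hy) (sub_ne_zero.2 hx)
  apply this
  nlinarith [hc]

private lemma ss_VE {k m₁ m₂ r₂ j : ℕ} :
    (segment ℝ (vA k m₁) (bA k m₂) ∩ segment ℝ (bB r₂ j) (vA r₂ (j+1))).Subsingleton := by
  apply inter_subsingleton_of_det
  simp only [vA, bA, bB]
  intro hc
  have hy : (2*(m₂:ℝ)+1) ≠ (2*(m₁:ℝ)+2) := fun h => rne_oe (a:=m₂) (b:=m₁) h
  apply sub_ne_zero.2 hy
  push_cast at hc ⊢
  nlinarith [hc]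

private lemma ss_DH {k m₂ r₁ r₂ j : ℕ} :
    (segment ℝ (bA k m₂) (vA (k+1) m₂) ∩ segment ℝ (vA r₁ j) (bB r₂ j)).Subsingleton := by
  apply inter_subsingleton_of_det
  simp only [vA, bA, bB]
  intro hc
  have hx : (2*(r₂:ℝ)+2) ≠ (2*(r₁:ℝ)+1) := fun h => rne_oe (a:=r₁) (b:=r₂) h.symm
  apply sub_ne_zero.2 hx
  push_cast at hc ⊢
  nlinarith [hc]

private lemma ss_DE {k m₂ r₂ j : ℕ} :
    (segment ℝ (bA k m₂) (vA (k+1) m₂) ∩ segment ℝ (bB r₂ j) (vA r₂ (j+1))).Subsingleton := by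
  apply inter_subsingleton_of_det
  simp only [vA, bA, bB]
  push_cast
  intro hc
  nlinarith [hc]

private lemma ss_HE {r₁ r₂ j r₂' j' : ℕ} :
    (segment ℝ (vA r₁ j) (bB r₂ j) ∩ segment ℝ (bB r₂' j') (vA r₂' (j'+1))).Subsingleton := by
  apply inter_subsingleton_of_det
  simp only [vA, bA, bB]
  intro hc
  have hx : (2*(r₂:ℝ)+2) ≠ (2*(r₁:ℝ)+1) := fun h => rne_oe (a:=r₁) (b:=r₂) h.symm
  apply sub_ne_zero.2 hx
  push_cast at hc ⊢
  nlinarith [hc]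

/-! ### perpendicularity and no-crossing lemmas -/

private lemma perp_VH {k m₁ m₂ r₁ r₂ j : ℕ} :
    SegPerp (vA k m₁, bA k m₂) (vA r₁ j, bB r₂ j) := by
  simp only [SegPerp, vA, bA, bB]
  ring

private lemma perp_DE {k m₂ r₂ j : ℕ} :
    SegPerp (bA k m₂, vA (k+1) m₂) (bB r₂ j, vA r₂ (j+1)) := by
  simp only [SegPerp, vA, bA, bB]
  push_cast
  ring

private lemma perp_HV {k m₁ m₂ r₁ r₂ j : ℕ} :
    SegPerp (vA r₁ j, bB r₂ j) (vA k m₁, bA k m₂) := by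
  simp only [SegPerp, vA, bA, bB]
  ring

private lemma perp_ED {k m₂ r₂ j : ℕ} :
    SegPerp (bB r₂ j, vA r₂ (j+1)) (bA k m₂, vA (k+1) m₂) := by
  simp only [SegPerp, vA, bA, bB]
  push_cast
  ring

private lemma ncross_VE {k m₁ m₂ r₂ j : ℕ} :
    ¬ SegCross (vA k m₁, bA k m₂) (bB r₂ j, vA r₂ (j+1)) := by
  rintro ⟨z, hz1, hz2⟩
  simp only at hz1 hz2
  have hx : z.1 = 2*(k:ℝ)+1 :=
    seg_fst_const (openSegment_subset_segment ℝ _ _ hz1) rfl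
  rw [openSegment_symm] at hz2
  have hs := openSeg_fst_strict hz2 (by simp only [vA, bB]; push_cast; linarith)
  rw [hx] at hs
  simp only [vA, bB] at hs
  obtain ⟨h1, h2⟩ := hs
  have h1' : 2*r₂+1 < 2*k+1 := by exact_mod_cast h1
  have h2' : 2*k+1 < 2*r₂+2 := by exact_mod_cast h2
  omega

private lemma ncross_DH {k m₂ r₁ r₂ j : ℕ} :
    ¬ SegCross (bA k m₂, vA (k+1) m₂) (vA r₁ j, bB r₂ j) := by
  rintro ⟨z, hz1, hz2⟩
  simp only at hz1 hz2
  have hy : z.2 = 2*(j:ℝ)+2 :=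
    seg_snd_const (openSegment_subset_segment ℝ _ _ hz2) rfl
  have hs := openSeg_snd_strict hz1 (by simp only [vA, bA]; push_cast; linarith)
  rw [hy] at hs
  simp only [vA, bA] at hs
  obtain ⟨h1, h2⟩ := hs
  have h1' : 2*m₂+1 < 2*j+2 := by exact_mod_cast h1
  have h2' : 2*j+2 < 2*m₂+2 := by exact_mod_cast h2
  omega


private lemma pl_first (p0 p1 p2 : ℝ × ℝ) : (Polyline.mk 2 ![p0,p1,p2]).first = p0 := rfl

private lemma pl_last (p0 p1 p2 : ℝ × ℝ) : (Polyline.mk 2 ![p0,p1,p2]).last = p2 := rfl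

private lemma pl_segs (p0 p1 p2 : ℝ × ℝ) :
    (Polyline.mk 2 ![p0,p1,p2]).segs = {(p0,p1),(p1,p2)} := by
  ext s
  simp only [Polyline.segs, Set.mem_setOf_eq, Set.mem_insert_iff, Set.mem_singleton_iff]
  constructor
  · rintro ⟨i, rfl⟩
    fin_cases i
    · left; rfl
    · right; rfl
  · rintro (rfl | rfl)
    · exact ⟨0, rfl⟩
    · exact ⟨1, rfl⟩

private lemma pl_curve (p0 p1 p2 : ℝ × ℝ) :
    (Polyline.mk 2 ![p0,p1,p2]).curve = segment ℝ p0 p1 ∪ segment ℝ p1 p2 := by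
  ext z
  simp only [Polyline.curve, Set.mem_iUnion, Set.mem_union]
  constructor
  · rintro ⟨i, hi⟩
    fin_cases i
    · exact Or.inl hi
    · exact Or.inr hi
  · rintro (h | h)
    · exact ⟨0, h⟩
    · exact ⟨1, h⟩

/-- Two spanning paths on a common set of `n` vertices admit a RacSim drawing on an
integer grid of size `2n × 2n` with at most one bend per edge. -/
theorem racsim_path_path {V : Type} [Fintype V] (n : ℕ)
    (hcard : Fintype.card V = n) (P₁ P₂ : SimpleGraph V)
    (h₁ : IsSpanningPath P₁) (h₂ : IsSpanningPath P₂) :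
    ∃ D : SimDrawing ![P₁, P₂], D.IsRacSim ∧
      D.OnGrid (2 * (n : ℤ)) (2 * (n : ℤ)) ∧
      ∀ i : Fin 2, D.BendsAtMost i 1 := by
  classical
  obtain ⟨f, hfinj, hfb, hfch⟩ := spath_order h₁
  obtain ⟨g, hginj, hgb, hgch⟩ := spath_order h₂
  rw [hcard] at hfb hgb
  set L1 : V → V → Polyline :=
    fun a b => ⟨2, ![vA (f a) (g a), bA (f a) (g b), vA (f b) (g b)]⟩ with hL1
  set L2 : V → V → Polyline :=
    fun c d => ⟨2, ![vA (f c) (g c), bB (f d) (g c), vA (f d) (g d)]⟩ with hL2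
  have hsym1 : ∀ a b : V, (if f a ≤ f b then L1 a b else L1 b a) =
      if f b ≤ f a then L1 b a else L1 a b := by
    intro a b
    rcases lt_trichotomy (f a) (f b) with h | h | h
    · rw [if_pos (le_of_lt h), if_neg (by omega)]
    · obtain rfl : a = b := hfinj h
      simp
    · rw [if_neg (by omega), if_pos (le_of_lt h)]
  have hsym2 : ∀ a b : V, (if g a ≤ g b then L2 a b else L2 b a) =
      if g b ≤ g a then L2 b a else L2 a b := by
    intro a b
    rcases lt_trichotomy (g a) (g b) with h | h | h
    · rw [if_pos (le_of_lt h), if_neg (by omega)]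
    · obtain rfl : a = b := hginj h
      simp
    · rw [if_neg (by omega), if_pos (le_of_lt h)]
  set poly1 : Sym2 V → Polyline :=
    fun e => Sym2.lift ⟨fun a b => if f a ≤ f b then L1 a b else L1 b a, hsym1⟩ e with hpoly1
  set poly2 : Sym2 V → Polyline :=
    fun e => Sym2.lift ⟨fun a b => if g a ≤ g b then L2 a b else L2 b a, hsym2⟩ e with hpoly2
  have hpoly1_eq : ∀ a b : V, f a ≤ f b → poly1 s(a,b) = L1 a b := by
    intro a b hle
    simp only [hpoly1, Sym2.lift_mk]
    rw [if_pos hle]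
  have hpoly2_eq : ∀ a b : V, g a ≤ g b → poly2 s(a,b) = L2 a b := by
    intro a b hle
    simp only [hpoly2, Sym2.lift_mk]
    rw [if_pos hle]
  have hposinj : Function.Injective (fun v => vA (f v) (g v)) := by
    intro a b hab
    simp only [vA, Prod.ext_iff] at hab
    apply hfinj
    have h2 : (f a : ℝ) = f b := by linarith [hab.1]
    exact_mod_cast h2
  -- representation of edges
  have h1rep : ∀ e ∈ P₁.edgeSet, ∃ a b : V, e = s(a,b) ∧ f b = f a + 1 := by
    intro e he
    induction e with
    | _ a b =>
      have hadj : P₁.Adj a b := (SimpleGraph.mem_edgeSet _).1 he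
      rcases (hfch a b).1 hadj with h | h
      · exact ⟨a, b, rfl, h.symm⟩
      · exact ⟨b, a, Sym2.eq_swap, h.symm⟩
  have h2rep : ∀ e ∈ P₂.edgeSet, ∃ a b : V, e = s(a,b) ∧ g b = g a + 1 := by
    intro e he
    induction e with
    | _ a b =>
      have hadj : P₂.Adj a b := (SimpleGraph.mem_edgeSet _).1 he
      rcases (hgch a b).1 hadj with h | h
      · exact ⟨a, b, rfl, h.symm⟩
      · exact ⟨b, a, Sym2.eq_swap, h.symm⟩
  -- joins
  have hjoins : ∀ (i : Fin 2) (a b : V), (![P₁, P₂] i).Adj a b →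
      (((![poly1, poly2] i) s(a, b)).first = vA (f a) (g a) ∧
        ((![poly1, poly2] i) s(a, b)).last = vA (f b) (g b)) ∨
      (((![poly1, poly2] i) s(a, b)).first = vA (f b) (g b) ∧
        ((![poly1, poly2] i) s(a, b)).last = vA (f a) (g a)) := by
    intro i a b _
    fin_cases i
    · simp only [Fin.mk_zero, Matrix.cons_val_zero]
      rcases le_total (f a) (f b) with hle | hle
      · left
        rw [hpoly1_eq a b hle, hL1]
        exact ⟨rfl, rfl⟩
      · right
        rw [Sym2.eq_swap, hpoly1_eq b a hle, hL1]
        exact ⟨rfl, rfl⟩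
    · simp only [Fin.mk_one, Matrix.cons_val_one, Matrix.head_cons, Matrix.cons_val_zero]
      rcases le_total (g a) (g b) with hle | hle
      · left
        rw [hpoly2_eq a b hle, hL2]
        exact ⟨rfl, rfl⟩
      · right
        rw [Sym2.eq_swap, hpoly2_eq b a hle, hL2]
        exact ⟨rfl, rfl⟩
  have hpoly1L : ∀ a b : V, f b = f a + 1 →
      poly1 s(a,b) = Polyline.mk 2 ![vA (f a) (g a), bA (f a) (g b), vA (f a + 1) (g b)] := by
    intro a b h
    rw [hpoly1_eq a b (by omega)]
    simp only [hL1]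
    rw [h]
  have hpoly2L : ∀ c d : V, g d = g c + 1 →
      poly2 s(c,d) = Polyline.mk 2 ![vA (f c) (g c), bB (f d) (g c), vA (f d) (g c + 1)] := by
    intro c d h
    rw [hpoly2_eq c d (by omega)]
    simp only [hL2]
    rw [h]
  refine ⟨⟨fun v => vA (f v) (g v), hposinj, ![poly1, poly2], hjoins⟩, ⟨?_, ?_, ?_⟩, ?_, ?_⟩
  · -- PlanarEach
    intro i e he e' he' hee
    fin_cases i
    · simp only [Fin.mk_zero, Matrix.cons_val_zero] at he he'
      obtain ⟨a, b, rfl, hfab⟩ := h1rep e he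
      obtain ⟨a', b', rfl, hfab'⟩ := h1rep e' he'
      have hkk : f a ≠ f a' := by
        intro hk
        apply hee
        obtain rfl : a = a' := hfinj hk
        obtain rfl : b = b' := hfinj (by omega)
        rfl
      intro z hz
      obtain ⟨hz1, hz2⟩ := hz
      simp only [SimDrawing.poly, Fin.mk_zero, Matrix.cons_val_zero] at hz1 hz2
      rw [hpoly1L a b hfab, pl_curve] at hz1
      rw [hpoly1L a' b' hfab', pl_curve] at hz2
      rcases Nat.lt_or_ge (f a) (f a') with hlt | hge
      · obtain ⟨hk1, hzq⟩ := p1_planar hlt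
          (fun hk1 => by obtain rfl : b = a' := hfinj (by omega); rfl) hz1 hz2
        obtain rfl : b = a' := hfinj (by omega)
        exact ⟨b, Sym2.mem_mk_right a b, Sym2.mem_mk_left b b', hzq⟩
      · have hlt' : f a' < f a := by omega
        obtain ⟨hk1, hzq⟩ := p1_planar hlt'
          (fun hk1 => by obtain rfl : b' = a := hfinj (by omega); rfl) hz2 hz1
        obtain rfl : b' = a := hfinj (by omega)
        exact ⟨b', Sym2.mem_mk_left b' b, Sym2.mem_mk_right a' b', hzq⟩
    · simp only [Fin.mk_one, Matrix.cons_val_one, Matrix.head_cons] at he he'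
      obtain ⟨a, b, rfl, hgab⟩ := h2rep e he
      obtain ⟨a', b', rfl, hgab'⟩ := h2rep e' he'
      have hkk : g a ≠ g a' := by
        intro hk
        apply hee
        obtain rfl : a = a' := hginj hk
        obtain rfl : b = b' := hginj (by omega)
        rfl
      intro z hz
      obtain ⟨hz1, hz2⟩ := hz
      simp only [SimDrawing.poly, Fin.mk_one, Matrix.cons_val_one, Matrix.head_cons, Matrix.cons_val_zero] at hz1 hz2
      rw [hpoly2L a b hgab, pl_curve] at hz1
      rw [hpoly2L a' b' hgab', pl_curve] at hz2
      rcases Nat.lt_or_ge (g a) (g a') with hlt | hge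
      · obtain ⟨hk1, hzq⟩ := p2_planar hlt
          (fun hk1 => by obtain rfl : b = a' := hginj (by omega); rfl) hz1 hz2
        obtain rfl : b = a' := hginj (by omega)
        exact ⟨b, Sym2.mem_mk_right a b, Sym2.mem_mk_left b b', hzq⟩
      · have hlt' : g a' < g a := by omega
        obtain ⟨hk1, hzq⟩ := p2_planar hlt'
          (fun hk1 => by obtain rfl : b' = a := hginj (by omega); rfl) hz2 hz1
        obtain rfl : b' = a := hginj (by omega)
        exact ⟨b', Sym2.mem_mk_left b' b, Sym2.mem_mk_right a' b', hzq⟩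
  · -- NoOverlaps
    intro i e he j e' he' hne s hs t ht
    fin_cases i <;> fin_cases j
    · -- (0,0)
      simp only [Fin.mk_zero, Matrix.cons_val_zero] at he he'
      have hee : e ≠ e' := by
        rcases hne with hne | hne
        · exact absurd rfl hne
        · exact hne
      obtain ⟨a, b, rfl, hfab⟩ := h1rep e he
      obtain ⟨a', b', rfl, hfab'⟩ := h1rep e' he'
      have hkk : f a ≠ f a' := by
        intro hk
        apply hee
        obtain rfl : a = a' := hfinj hk
        obtain rfl : b = b' := hfinj (by omega)
        rfl
      simp only [SimDrawing.poly, Fin.mk_zero, Matrix.cons_val_zero] at hs ht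
      rw [hpoly1L a b hfab, pl_segs] at hs
      rw [hpoly1L a' b' hfab', pl_segs] at ht
      simp only [Set.mem_insert_iff, Set.mem_singleton_iff] at hs ht
      rcases hs with rfl | rfl <;> rcases ht with rfl | rfl
      · exact ss_VV hkk
      · exact ss_VD
      · rw [Set.inter_comm]; exact ss_VD
      · exact ss_DD hkk
    · -- (0,1)
      simp only [Fin.mk_zero, Fin.mk_one, Matrix.cons_val_zero, Matrix.cons_val_one,
        Matrix.head_cons] at he he'
      obtain ⟨a, b, rfl, hfab⟩ := h1rep e he
      obtain ⟨c, d, rfl, hgcd⟩ := h2rep e' he'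
      simp only [SimDrawing.poly, Fin.mk_zero, Fin.mk_one, Matrix.cons_val_zero,
        Matrix.cons_val_one, Matrix.head_cons] at hs ht
      rw [hpoly1L a b hfab, pl_segs] at hs
      rw [hpoly2L c d hgcd, pl_segs] at ht
      simp only [Set.mem_insert_iff, Set.mem_singleton_iff] at hs ht
      rcases hs with rfl | rfl <;> rcases ht with rfl | rfl
      · exact ss_VH
      · exact ss_VE
      · exact ss_DH
      · exact ss_DE
    · -- (1,0)
      simp only [Fin.mk_zero, Fin.mk_one, Matrix.cons_val_zero, Matrix.cons_val_one,
        Matrix.head_cons] at he he'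
      obtain ⟨c, d, rfl, hgcd⟩ := h2rep e he
      obtain ⟨a, b, rfl, hfab⟩ := h1rep e' he'
      simp only [SimDrawing.poly, Fin.mk_zero, Fin.mk_one, Matrix.cons_val_zero,
        Matrix.cons_val_one, Matrix.head_cons] at hs ht
      rw [hpoly2L c d hgcd, pl_segs] at hs
      rw [hpoly1L a b hfab, pl_segs] at ht
      simp only [Set.mem_insert_iff, Set.mem_singleton_iff] at hs ht
      rcases hs with rfl | rfl <;> rcases ht with rfl | rfl
      · rw [Set.inter_comm]; exact ss_VH
      · rw [Set.inter_comm]; exact ss_DH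
      · rw [Set.inter_comm]; exact ss_VE
      · rw [Set.inter_comm]; exact ss_DE
    · -- (1,1)
      simp only [Fin.mk_one, Matrix.cons_val_one, Matrix.head_cons] at he he'
      have hee : e ≠ e' := by
        rcases hne with hne | hne
        · exact absurd rfl hne
        · exact hne
      obtain ⟨a, b, rfl, hgab⟩ := h2rep e he
      obtain ⟨a', b', rfl, hgab'⟩ := h2rep e' he'
      have hkk : g a ≠ g a' := by
        intro hk
        apply hee
        obtain rfl : a = a' := hginj hk
        obtain rfl : b = b' := hginj (by omega)
        rfl
      simp only [SimDrawing.poly, Fin.mk_one, Matrix.cons_val_one, Matrix.head_cons, Matrix.cons_val_zero] at hs ht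
      rw [hpoly2L a b hgab, pl_segs] at hs
      rw [hpoly2L a' b' hgab', pl_segs] at ht
      simp only [Set.mem_insert_iff, Set.mem_singleton_iff] at hs ht
      rcases hs with rfl | rfl <;> rcases ht with rfl | rfl
      · exact ss_HH hkk
      · exact ss_HE
      · rw [Set.inter_comm]; exact ss_HE
      · exact ss_EE hkk
  · -- RightAngleCrossings
    intro i j hij e he e' he' s hs t ht hcross
    fin_cases i <;> fin_cases j
    · exact absurd rfl hij
    · simp only [Fin.mk_zero, Fin.mk_one, Matrix.cons_val_zero, Matrix.cons_val_one,
        Matrix.head_cons] at he he'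
      obtain ⟨a, b, rfl, hfab⟩ := h1rep e he
      obtain ⟨c, d, rfl, hgcd⟩ := h2rep e' he'
      simp only [SimDrawing.poly, Fin.mk_zero, Fin.mk_one, Matrix.cons_val_zero,
        Matrix.cons_val_one, Matrix.head_cons] at hs ht
      rw [hpoly1L a b hfab, pl_segs] at hs
      rw [hpoly2L c d hgcd, pl_segs] at ht
      simp only [Set.mem_insert_iff, Set.mem_singleton_iff] at hs ht
      rcases hs with rfl | rfl <;> rcases ht with rfl | rfl
      · exact perp_VH
      · exact absurd hcross ncross_VE
      · exact absurd hcross ncross_DH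
      · exact perp_DE
    · simp only [Fin.mk_zero, Fin.mk_one, Matrix.cons_val_zero, Matrix.cons_val_one,
        Matrix.head_cons] at he he'
      obtain ⟨c, d, rfl, hgcd⟩ := h2rep e he
      obtain ⟨a, b, rfl, hfab⟩ := h1rep e' he'
      simp only [SimDrawing.poly, Fin.mk_zero, Fin.mk_one, Matrix.cons_val_zero,
        Matrix.cons_val_one, Matrix.head_cons] at hs ht
      rw [hpoly2L c d hgcd, pl_segs] at hs
      rw [hpoly1L a b hfab, pl_segs] at ht
      simp only [Set.mem_insert_iff, Set.mem_singleton_iff] at hs ht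
      rcases hs with rfl | rfl <;> rcases ht with rfl | rfl
      · exact perp_HV
      · exact absurd (segcross_comm.1 hcross) ncross_DH
      · exact absurd (segcross_comm.1 hcross) ncross_VE
      · exact perp_ED
    · exact absurd rfl hij
  · -- OnGrid
    have hogv : ∀ (kk mm : ℕ), kk < n → mm < n →
        OnGridPt (2*(n:ℤ)) (2*(n:ℤ)) (vA kk mm) := by
      intro kk mm hk hm
      refine ⟨2*kk+1, 2*mm+2, ?_, by omega, by omega, by omega, by omega⟩
      simp only [vA, Prod.mk.injEq]
      constructor <;> push_cast <;> ring
    have hogbA : ∀ (kk mm : ℕ), kk < n → mm < n →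
        OnGridPt (2*(n:ℤ)) (2*(n:ℤ)) (bA kk mm) := by
      intro kk mm hk hm
      refine ⟨2*kk+1, 2*mm+1, ?_, by omega, by omega, by omega, by omega⟩
      simp only [bA, Prod.mk.injEq]
      constructor <;> push_cast <;> ring
    have hogbB : ∀ (kk mm : ℕ), kk < n → mm < n →
        OnGridPt (2*(n:ℤ)) (2*(n:ℤ)) (bB kk mm) := by
      intro kk mm hk hm
      refine ⟨2*kk+2, 2*mm+2, ?_, by omega, by omega, by omega, by omega⟩
      simp only [bB, Prod.mk.injEq]
      constructor <;> push_cast <;> ring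
    constructor
    · intro v
      exact hogv (f v) (g v) (hfb v) (hgb v)
    · intro i e he
      fin_cases i
      · simp only [Fin.mk_zero, Matrix.cons_val_zero] at he
        obtain ⟨a, b, rfl, hfab⟩ := h1rep e he
        simp only [SimDrawing.poly, Fin.mk_zero, Matrix.cons_val_zero]
        rw [hpoly1L a b hfab]
        intro k
        fin_cases k
        · exact hogv (f a) (g a) (hfb a) (hgb a)
        · exact hogbA (f a) (g b) (hfb a) (hgb b)
        · exact hogv (f a + 1) (g b) (by rw [← hfab]; exact hfb b) (hgb b)
      · simp only [Fin.mk_one, Matrix.cons_val_one, Matrix.head_cons] at he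
        obtain ⟨c, d, rfl, hgcd⟩ := h2rep e he
        simp only [SimDrawing.poly, Fin.mk_one, Matrix.cons_val_one, Matrix.head_cons, Matrix.cons_val_zero]
        rw [hpoly2L c d hgcd]
        intro k
        fin_cases k
        · exact hogv (f c) (g c) (hfb c) (hgb c)
        · exact hogbB (f d) (g c) (hfb d) (hgb c)
        · exact hogv (f d) (g c + 1) (hfb d) (by rw [← hgcd]; exact hgb d)
  · -- BendsAtMost
    intro i e he
    fin_cases i
    · simp only [Fin.mk_zero, Matrix.cons_val_zero] at he
      obtain ⟨a, b, rfl, hfab⟩ := h1rep e he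
      simp only [SimDrawing.poly, Fin.mk_zero, Matrix.cons_val_zero]
      rw [hpoly1L a b hfab]
    · simp only [Fin.mk_one, Matrix.cons_val_one, Matrix.head_cons] at he
      obtain ⟨c, d, rfl, hgcd⟩ := h2rep e he
      simp only [SimDrawing.poly, Fin.mk_one, Matrix.cons_val_one, Matrix.head_cons, Matrix.cons_val_zero]
      rw [hpoly2L c d hgcd]
end

section
/- The edge set of every outerplanar graph can be partitioned into two sets each of which forms a forest; that is, every outerplanar graph has arboricity at most 2. -/
open SimpleGraph

/-- A graph is outerplanar if it admits a 1-page book embedding: there is a linear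
order on the vertices (given by an injection into `ℕ`) such that no two edges
interleave. -/
def IsOuterplanar {V : Type} (G : SimpleGraph V) : Prop :=
  ∃ ord : V → ℕ, Function.Injective ord ∧
    ∀ e ∈ G.edgeSet, ∀ e' ∈ G.edgeSet,
      ∀ a b c d : V, e = s(a, b) → e' = s(c, d) →
        ¬(ord a < ord c ∧ ord c < ord b ∧ ord b < ord d)


lemma aux_cycle {V : Type} {α : Type} [LinearOrder α] {H : SimpleGraph V}
    (f : V → α) (hinj : Function.Injective f)
    (h : ∀ a b c : V, H.Adj a b → H.Adj c b → f a < f b → f c < f b → a = c)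
    (m : V) (c : H.Walk m m) (hc : c.IsCycle) (hmax : ∀ x ∈ c.support, f x ≤ f m) :
    False := by
  cases c with
  | nil => exact hc.ne_nil rfl
  | @cons _ u _ hadj p =>
    obtain ⟨w, hadj2, q, hq⟩ := Walk.exists_eq_cons_of_ne hadj.ne p.reverse
    have hu : f u < f m := by
      have : u ∈ (Walk.cons hadj p).support := by simp [Walk.support_cons]
      exact lt_of_le_of_ne (hmax u this) (fun he => hadj.ne' (hinj he))
    have hw : f w < f m := by
      have hw1 : w ∈ p.reverse.support := by rw [hq]; simp [Walk.support_cons]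
      have : w ∈ (Walk.cons hadj p).support := by
        rw [Walk.support_reverse] at hw1
        simp [Walk.support_cons]
        right
        exact List.mem_reverse.mp hw1
      exact lt_of_le_of_ne (hmax w this) (fun he => hadj2.ne' (hinj he))
    have huw : u = w := h u m w hadj.symm hadj2.symm hu hw
    have hnd := hc.edges_nodup
    rw [Walk.edges_cons] at hnd
    have hnotmem := (List.nodup_cons.mp hnd).1
    apply hnotmem
    have : s(m, w) ∈ p.reverse.edges := by rw [hq]; simp [Walk.edges_cons]
    rw [Walk.edges_reverse, List.mem_reverse] at this
    exact huw ▸ this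

lemma forest_of_unique {V : Type} {α : Type} [LinearOrder α] (H : SimpleGraph V)
    (f : V → α) (hinj : Function.Injective f)
    (h : ∀ a b c : V, H.Adj a b → H.Adj c b → f a < f b → f c < f b → a = c) :
    H.IsAcyclic := by
  classical
  intro v c hc
  obtain ⟨m, hm, hmax⟩ := Finset.exists_max_image c.support.toFinset f
    ⟨v, by simp⟩
  rw [List.mem_toFinset] at hm
  refine aux_cycle f hinj h m (c.rotate m hm) (hc.rotate hm) ?_
  intro x hx
  rcases (Walk.support_eq_cons (c.rotate m hm)) ▸ hx with hx'
  rw [List.mem_cons] at hx'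
  rcases hx' with rfl | hx'
  · exact le_rfl
  · have : x ∈ (c.rotate m hm).support.tail := hx'
    have : x ∈ c.support.tail := ((Walk.support_rotate c m hm).mem_iff).mp this
    exact hmax x (List.mem_toFinset.mpr (List.mem_of_mem_tail this))

/-- The edge set of every outerplanar graph can be partitioned into two sets, each
of which forms a forest: every outerplanar graph has arboricity at most 2. -/
theorem outerplanar_arboricity_le_two {V : Type} [Fintype V] (G : SimpleGraph V)
    (hG : IsOuterplanar G) :
    ∃ E₁ E₂ : Set (Sym2 V), E₁ ∪ E₂ = G.edgeSet ∧ Disjoint E₁ E₂ ∧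
      (SimpleGraph.fromEdgeSet E₁).IsAcyclic ∧
      (SimpleGraph.fromEdgeSet E₂).IsAcyclic := by
  obtain ⟨ord, hinj, hcross⟩ := hG
  -- E₂ : "non-outermost" edges; E₁ : the rest
  set E₂ : Set (Sym2 V) := {e | e ∈ G.edgeSet ∧ ∃ a b : V, e = s(a, b) ∧
      ord a < ord b ∧ ∃ w : V, s(w, b) ∈ G.edgeSet ∧ ord w < ord a} with hE₂
  set E₁ : Set (Sym2 V) := G.edgeSet \ E₂ with hE₁
  have hsub : E₂ ⊆ G.edgeSet := fun e he => he.1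
  refine ⟨E₁, E₂, Set.diff_union_of_subset hsub, Set.disjoint_sdiff_left, ?_, ?_⟩
  · -- E₁ acyclic : each vertex has at most one E₁-neighbor with smaller ord
    refine forest_of_unique _ ord hinj ?_
    intro a b c hab hcb ha hb
    rw [fromEdgeSet_adj] at hab hcb
    by_contra hne
    have key : ∀ x y : V, ord x < ord y → ord y < ord b →
        s(x, b) ∈ E₁ → s(y, b) ∈ E₁ → False := by
      intro x y hxy hyb hx1 hy1
      exact hy1.2 ⟨hy1.1, y, b, rfl, hyb, x, hx1.1, hxy⟩
    rcases lt_trichotomy (ord a) (ord c) with hlt | heq | hlt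
    · exact key a c hlt hb hab.1 hcb.1
    · exact hne (hinj heq)
    · exact key c a hlt ha hcb.1 hab.1
  · -- E₂ acyclic : each vertex has at most one E₂-neighbor with larger ord
    refine forest_of_unique _ (OrderDual.toDual ∘ ord) (fun x y hxy => hinj hxy) ?_
    intro a b c hab hcb ha hb
    have ha' : ord b < ord a := ha
    have hb' : ord b < ord c := hb
    rw [fromEdgeSet_adj] at hab hcb
    by_contra hne
    have key : ∀ x y : V, ord b < ord x → ord x < ord y →
        s(x, b) ∈ E₂ → s(y, b) ∈ E₂ → False := by
      intro x y hbx hxy hx2 hy2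
      obtain ⟨hxe, a₀, b₀, hxs, hord, w, hw, hword⟩ := hx2
      have hwit : s(w, x) ∈ G.edgeSet ∧ ord w < ord b := by
        rw [Sym2.eq_iff] at hxs
        rcases hxs with ⟨rfl, rfl⟩ | ⟨rfl, rfl⟩
        · exact absurd hord (not_lt.mpr hbx.le)
        · exact ⟨hw, hword⟩
      have hyedge : s(b, y) ∈ G.edgeSet := by
        rw [Sym2.eq_swap]; exact hy2.1
      exact hcross s(w, x) hwit.1 s(b, y) hyedge w x b y rfl rfl
        ⟨hwit.2, hbx, hxy⟩
    rcases lt_trichotomy (ord a) (ord c) with hlt | heq | hlt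
    · exact key a c ha' hlt hab.1 hcb.1
    · exact hne (hinj heq)
    · exact key c a hb' hlt hcb.1 hab.1
end
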